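/- arXiv:0910.4744 — 6 statements merged into one kernel-verified Lean document; each statement's English description precedes it below -/
import Mathlib

section
/- Let s = a + ib with a > 0 and b real, let k ∈ [0,1), and let c be a complex constant, with M = a·k·|s| + (a−1)·|s+c| if 0 < a ≤ 1 and M = k·|s| if a > 1. Let f ∈ 𝒜 with f'(z) ≠ 0 for all z in 𝔻. If the inequality |c|z|² + s − a(1−|z|²)·[s(1 + z f''(z)/f'(z)) + (1−s)·z f'(z)/f(z)]| ≤ M holds at every z ∈ 𝔻 \ {0} at which f(z) ≠ 0, then in fact f(z) ≠ 0 for every z with 0 < |z| < 1. -/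
/-!
If `s ≠ 1`, a zero `z₁ ≠ 0` of `f` is simple, so the term `a (1 - |z|²)(1 - s) z f'/f` has a
simple pole at `z₁` and the expression bounded by `M` blows up near `z₁`.

If `s = 1`, then `a = 1`, `M = k`, and the hypothesis becomes `|c'|z|² - (1 - |z|²) z f''/f'| ≤ k`
with `c' = c + 1`, on all of `𝔻` by continuity; the maximum principle gives `|c'| ≤ k`. Put
`q = f / (z f')` and `λ(t) = (e^{2t} - 1) / (1 - c')`. Then `q(u) = -λ(t)` says that `e^t u` is a
zero of the Loewner chain `f(e^{-t} z) + (e^t - e^{-t}) z f'(e^{-t} z) / (1 - c')`. A zero `z₁` of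
`f` gives such a pair `(0, z₁)`, and the pairs with `e^t |u| ≤ |z₁|` form a compact set, with a
largest time `t₀`, attained at `u₀`. Along the branch `u(t)` through `u₀` given by the inverse
function theorem, `d/dt |e^t u(t)|²` at `t₀` is `2 e^{2t₀} |u₀|² (1 - Re (2A / ζ))`, where
`A = e^{2t₀}(1 - |u₀|²)` and `ζ = (1 - |u₀|²)((1 - c') + (e^{2t₀} - 1)(1 + u₀ f''(u₀)/f'(u₀)))`.
The two bounds put `ζ` in the disc `|ζ - A| < A`, where `Re (2A / ζ) > 1`. So the zero moves
strictly inward, and such pairs exist at later times: a contradiction.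
-/

open Metric Set Filter Complex
open scoped Topology

lemma HasDerivAt.eventually_lt_of_neg_right {g : ℝ → ℝ} {g' t₀ : ℝ} (hg : HasDerivAt g g' t₀)
    (hg' : g' < 0) : ∀ᶠ t in 𝓝[>] t₀, g t < g t₀ := by
  filter_upwards [((hasDerivAt_iff_tendsto_slope.1 hg).mono_left
    (nhdsGT_le_nhdsNE t₀)).eventually_lt_const hg', self_mem_nhdsWithin] with t hslope ht
  exact (slope_neg_iff_of_le (le_of_lt ht)).1 hslope

lemma HasStrictDerivAt.eventually_exists_norm_mul_exp_lt {q : ℂ → ℂ} {D z₀ μ' : ℂ}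
    {μ : ℝ → ℂ} {t₀ : ℝ} (hq : HasStrictDerivAt q D z₀) (hD : D ≠ 0)
    (hμ : HasDerivAt μ μ' t₀) (hqz₀ : q z₀ = μ t₀)
    (hre : ((starRingEnd ℂ) z₀ * (z₀ + μ' / D)).re < 0) :
    ∀ᶠ t in 𝓝[>] t₀, ∃ z, ‖z‖ * Real.exp t < ‖z₀‖ * Real.exp t₀ ∧ q z = μ t := by
  set ψ := hq.localInverse q D z₀ hD
  have hψ : HasDerivAt ψ D⁻¹ (μ t₀) := hqz₀ ▸ (hq.to_localInverse hD).hasDerivAt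
  have hψz₀ : ψ (μ t₀) = z₀ := hqz₀ ▸ (hq.hasStrictFDerivAt_equiv hD).localInverse_apply_image
  have hqψ : ∀ᶠ t in 𝓝 t₀, q (ψ (μ t)) = μ t :=
    hμ.continuousAt.eventually (hqz₀ ▸ (hq.hasStrictFDerivAt_equiv hD).eventually_right_inverse)
  set v : ℝ → ℂ := fun t => (Real.exp t : ℂ) * ψ (μ t)
  have hnorm_v : ∀ t, ‖v t‖ = ‖ψ (μ t)‖ * Real.exp t := fun t => by
    simp [v, mul_comm]
  have hv : HasDerivAt v (Real.exp t₀ * (z₀ + μ' / D)) t₀ := by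
    have := (Real.hasDerivAt_exp t₀).ofReal_comp.mul (hψ.comp t₀ hμ)
    rw [Function.comp_apply, hψz₀] at this
    exact this.congr_deriv (by field_simp)
  have hdecr : 2 * inner ℝ (v t₀) (Real.exp t₀ * (z₀ + μ' / D)) < 0 := by
    rw [Complex.inner]
    have hconj : ↑(Real.exp t₀) * (z₀ + μ' / D) * (starRingEnd ℂ) (v t₀)
        = ((Real.exp t₀ * Real.exp t₀ : ℝ) : ℂ) * ((starRingEnd ℂ) z₀ * (z₀ + μ' / D)) := by
      simp only [v, hψz₀, map_mul, conj_ofReal]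
      push_cast
      ring
    rw [hconj, re_ofReal_mul]
    have := Real.exp_pos t₀
    nlinarith [mul_pos this this]
  filter_upwards [hv.norm_sq.eventually_lt_of_neg_right hdecr, nhdsWithin_le_nhds hqψ]
    with t hlt hqt
  refine ⟨ψ (μ t), ?_, hqt⟩
  rw [← hnorm_v, ← hψz₀, ← hnorm_v]
  exact lt_of_pow_lt_pow_left₀ 2 (norm_nonneg _) hlt

lemma isCompact_setOf_norm_mul_exp_le_and_eq {q : ℂ → ℂ} {μ : ℝ → ℂ} {ρ : ℝ}
    (hq : ContinuousOn q (closedBall 0 ρ)) (hμ : Continuous μ)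
    (hμ_top : Tendsto (fun t => ‖μ t‖) atTop atTop) :
    IsCompact ({p : ℝ × ℂ | 0 ≤ p.1 ∧ ‖p.2‖ * Real.exp p.1 ≤ ρ} ∩ {p | q p.2 = μ p.1}) := by
  set L := {p : ℝ × ℂ | 0 ≤ p.1 ∧ ‖p.2‖ * Real.exp p.1 ≤ ρ}
  have hL : L ⊆ univ ×ˢ closedBall 0 ρ := fun p hp =>
    ⟨trivial, mem_closedBall_zero_iff.2 <|
      le_trans (le_mul_of_one_le_right (norm_nonneg _) (Real.one_le_exp hp.1)) hp.2⟩
  have hclosed : IsClosed (L ∩ (fun p : ℝ × ℂ => (q p.2, μ p.1)) ⁻¹' diagonal ℂ) := by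
    refine ContinuousOn.preimage_isClosed_of_isClosed ?_ ?_ isClosed_diagonal
    · exact ((hq.comp continuousOn_snd fun p hp => (hL hp).2)).prodMk
        (hμ.comp continuous_fst).continuousOn
    · exact (isClosed_le continuous_const continuous_fst).inter
        (isClosed_le (f := fun p : ℝ × ℂ => ‖p.2‖ * Real.exp p.1) (by fun_prop)
          continuous_const)
  obtain ⟨B, hB⟩ := (isCompact_closedBall (0 : ℂ) ρ).exists_bound_of_continuousOn hq
  obtain ⟨T, hT⟩ := eventually_atTop.1 (hμ_top.eventually_gt_atTop B)
  change IsCompact (L ∩ (fun p : ℝ × ℂ => (q p.2, μ p.1)) ⁻¹' diagonal ℂ)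
  refine ((isCompact_Icc (a := 0) (b := T)).prod (isCompact_closedBall 0 ρ)).of_isClosed_subset
    hclosed ?_
  rintro p ⟨hpL, hpq⟩
  refine ⟨⟨hpL.1, le_of_not_gt fun hTp => ?_⟩, (hL hpL).2⟩
  have hbound := hB _ (hL hpL).2
  rw [show q p.2 = μ p.1 from hpq] at hbound
  exact (hT p.1 hTp.le).not_ge hbound

lemma one_lt_re_two_mul_div_of_norm_sub_lt {A : ℝ} {ζ : ℂ} (h : ‖ζ - A‖ < A) :
    1 < (2 * A / ζ).re := by
  have hA : 0 < A := (norm_nonneg _).trans_lt h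
  have hdisc : ζ.re ^ 2 + ζ.im ^ 2 < 2 * A * ζ.re := by
    have hsq := pow_lt_pow_left₀ h (norm_nonneg _) two_ne_zero
    rw [Complex.sq_norm, Complex.normSq_apply] at hsq
    simp only [sub_re, ofReal_re, sub_im, ofReal_im, sub_zero] at hsq
    nlinarith
  have hre : 0 < ζ.re := by nlinarith [sq_nonneg ζ.re, sq_nonneg ζ.im]
  have hnormSq : 0 < normSq ζ := by rw [normSq_apply]; nlinarith [sq_nonneg ζ.im]
  rw [div_re, normSq_apply] at *
  simp only [mul_re, mul_im, ofReal_re, ofReal_im, re_ofNat, im_ofNat]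
  rw [← add_div, lt_div_iff₀ hnormSq]
  nlinarith

lemma one_lt_re_two_mul_div_of_norm_le {c H : ℂ} {k x E : ℝ} (hc : ‖c‖ ≤ k) (hk : k < 1)
    (hE : 1 ≤ E) (hEx : E * x < 1) (hH : ‖c * x - (1 - x) * H‖ ≤ k) :
    1 < (2 * E / ((1 - c) + (E - 1) * (1 + H))).re := by
  have hx : x < 1 := by nlinarith
  set A := E * (1 - x)
  have hA : 0 < A := by positivity
  have hdist : ‖(1 - x) * ((1 - c) + (E - 1) * (1 + H)) - A‖ < A := by
    have heq : (1 - x) * ((1 - c) + (E - 1) * (1 + H)) - A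
        = ((E * x - 1 : ℝ) : ℂ) * c - ((E - 1 : ℝ) : ℂ) * (c * x - (1 - x) * H) := by
      simp only [A]; push_cast; ring
    calc _ = ‖((E * x - 1 : ℝ) : ℂ) * c - ((E - 1 : ℝ) : ℂ) * (c * x - (1 - x) * H)‖ := by
          rw [heq]
      _ ≤ (1 - E * x) * k + (E - 1) * k := by
          refine (norm_sub_le _ _).trans (add_le_add ?_ ?_) <;>
            rw [norm_mul, norm_real, Real.norm_eq_abs]
          · rw [abs_of_neg (by linarith)]
            exact mul_le_mul (by linarith) hc (norm_nonneg _) (by linarith)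
          · rw [abs_of_nonneg (by linarith)]
            exact mul_le_mul_of_nonneg_left hH (by linarith)
      _ = k * A := by ring
      _ < A := by nlinarith
  have h1x : (1 - x : ℂ) ≠ 0 := by exact_mod_cast (sub_pos.2 hx).ne'
  convert one_lt_re_two_mul_div_of_norm_sub_lt hdist using 2
  simp only [A]; push_cast
  field_simp

lemma norm_le_of_forall_norm_mul_sq_sub_le {c : ℂ} {k : ℝ} {h : ℂ → ℂ}
    (hh : DifferentiableOn ℂ h (ball 0 1)) (hh0 : h 0 = 0)
    (hb : ∀ z ∈ ball (0 : ℂ) 1, ‖c * (‖z‖ : ℂ) ^ 2 - (1 - (‖z‖ : ℂ) ^ 2) * h z‖ ≤ k) :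
    ‖c‖ ≤ k := by
  have hr : ∀ r ∈ Ioo (0 : ℝ) 1, ‖c‖ * r ^ 2 ≤ k := by
    rintro r ⟨hr0, hr1⟩
    have hmax := Complex.norm_le_of_forall_mem_frontier_norm_le (isBounded_ball (x := 0) (r := r))
      (f := fun z => c * (r : ℂ) ^ 2 - (1 - (r : ℂ) ^ 2) * h z) (C := k) ?_ ?_
      (subset_closure (mem_ball_self hr0))
    · simpa [hh0, abs_of_pos hr0] using hmax
    · refine DifferentiableOn.diffContOnCl ?_
      rw [closure_ball _ hr0.ne']
      exact ((hh.mono (closedBall_subset_ball hr1)).const_mul _).const_sub _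
    · intro z hz
      rw [frontier_ball _ hr0.ne', mem_sphere_zero_iff_norm] at hz
      simpa [hz] using hb z (mem_ball_zero_iff.2 (hz ▸ hr1))
  have hlim : Tendsto (fun r : ℝ => ‖c‖ * r ^ 2) (𝓝[<] 1) (𝓝 ‖c‖) := by
    have : Continuous fun r : ℝ => ‖c‖ * r ^ 2 := by fun_prop
    simpa using (this.tendsto 1).mono_left nhdsWithin_le_nhds
  exact le_of_tendsto hlim (eventually_of_mem (Ioo_mem_nhdsLT zero_lt_one) hr)

lemma tendsto_sub_mul_deriv_div_of_simple_zero {𝕜 : Type*} [NontriviallyNormedField 𝕜]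
    [CompleteSpace 𝕜] {f : 𝕜 → 𝕜} {z₀ : 𝕜} (hf : AnalyticAt 𝕜 f z₀) (hz₀ : f z₀ = 0)
    (hd : deriv f z₀ ≠ 0) :
    Tendsto (fun z => (z - z₀) * (deriv f z / f z)) (𝓝[≠] z₀) (𝓝 1) := by
  have hg : ContinuousAt (dslope f z₀) z₀ := continuousAt_dslope_same.2 hf.differentiableAt
  have hlim : Tendsto (fun z => deriv f z / dslope f z₀ z) (𝓝[≠] z₀) (𝓝 1) := by
    have := hf.deriv.continuousAt.div hg (by rwa [dslope_same])
    rw [ContinuousAt, Pi.div_apply, dslope_same, div_self hd] at this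
    exact this.mono_left nhdsWithin_le_nhds
  refine hlim.congr' (eventually_nhdsWithin_of_forall fun z hz => ?_)
  have hfz : f z = (z - z₀) * dslope f z₀ z := by
    simpa [hz₀] using (sub_smul_dslope f z₀ z).symm
  change _ = (z - z₀) * (deriv f z / f z)
  rw [hfz, mul_comm (z - z₀), ← div_div, div_right_comm, div_mul_cancel₀ _ (sub_ne_zero.2 hz)]

/-- `f z / (z f'(z))`: `dslope f 0` is `f z / z`, extended by `f'(0)` at the origin. -/
noncomputable def invStarlikeRatio (f : ℂ → ℂ) (z : ℂ) : ℂ := dslope f 0 z / deriv f z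

section invStarlikeRatio

variable {f : ℂ → ℂ} {z : ℂ}

lemma invStarlikeRatio_zero (hf'0 : deriv f 0 = 1) : invStarlikeRatio f 0 = 1 := by
  simp [invStarlikeRatio, hf'0]

lemma invStarlikeRatio_of_ne_zero (hf0 : f 0 = 0) (hz : z ≠ 0) :
    invStarlikeRatio f z = f z / (z * deriv f z) := by
  rw [invStarlikeRatio, dslope_of_ne f hz, slope_def_field, hf0, sub_zero, sub_zero, div_div]

lemma continuousOn_invStarlikeRatio (hf : AnalyticOnNhd ℂ f (ball 0 1))
    (hf' : ∀ z ∈ ball (0 : ℂ) 1, deriv f z ≠ 0) :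
    ContinuousOn (invStarlikeRatio f) (ball 0 1) := by
  have hslope : ContinuousOn (dslope f 0) (ball 0 1) :=
    ((differentiableOn_dslope (ball_mem_nhds 0 one_pos)).2 hf.differentiableOn).continuousOn
  exact hslope.div hf.deriv.continuousOn hf'

lemma hasStrictDerivAt_invStarlikeRatio (hf : AnalyticOnNhd ℂ f (ball 0 1)) (hf0 : f 0 = 0)
    (hf' : ∀ z ∈ ball (0 : ℂ) 1, deriv f z ≠ 0) (hz : z ∈ ball (0 : ℂ) 1) (hz0 : z ≠ 0) :
    HasStrictDerivAt (invStarlikeRatio f)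
      ((1 - invStarlikeRatio f z * (1 + z * deriv (deriv f) z / deriv f z)) / z) z := by
  have hzf' : z * deriv f z ≠ 0 := mul_ne_zero hz0 (hf' z hz)
  have hdiv := (hf z hz).hasStrictDerivAt.div
    ((hasStrictDerivAt_id z).mul (hf.deriv z hz).hasStrictDerivAt) hzf'
  have heq : (f / (id * deriv f)) =ᶠ[𝓝 z] invStarlikeRatio f := by
    filter_upwards [isOpen_ne.mem_nhds hz0] with w hw
    exact (invStarlikeRatio_of_ne_zero hf0 hw).symm
  refine (hdiv.congr_of_eventuallyEq heq).congr_deriv ?_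
  rw [invStarlikeRatio_of_ne_zero hf0 hz0]
  simp only [Pi.mul_apply, id]
  have hd := hf' z hz
  field_simp

end invStarlikeRatio

noncomputable def loewnerParam (c : ℂ) (t : ℝ) : ℂ := ((Real.exp (2 * t) - 1 : ℝ) : ℂ) / (1 - c)

section loewnerParam

variable {c : ℂ}

lemma continuous_loewnerParam (c : ℂ) : Continuous (loewnerParam c) := by
  unfold loewnerParam; fun_prop

lemma hasDerivAt_loewnerParam (c : ℂ) (t : ℝ) :
    HasDerivAt (loewnerParam c) (2 * Real.exp (2 * t) / (1 - c)) t := by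
  have := (((hasDerivAt_id t).const_mul 2).exp.sub_const 1).ofReal_comp.div_const (1 - c)
  exact this.congr_deriv (by simp only [id]; push_cast; ring)

lemma tendsto_norm_loewnerParam (hc : c ≠ 1) :
    Tendsto (fun t => ‖loewnerParam c t‖) atTop atTop := by
  have hexp : Tendsto (fun t : ℝ => (Real.exp (2 * t) - 1) / ‖1 - c‖) atTop atTop :=
    ((Real.tendsto_exp_atTop.comp (tendsto_id.const_mul_atTop two_pos)).atTop_add
      tendsto_const_nhds).atTop_div_const (norm_pos_iff.2 (sub_ne_zero.2 hc.symm))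
  refine tendsto_atTop_mono (fun t => ?_) hexp
  rw [loewnerParam, norm_div, norm_real, Real.norm_eq_abs]
  gcongr
  exact le_abs_self _

lemma loewnerParam_ne_neg_one {k t : ℝ} (hc : ‖c‖ ≤ k) (hk : k < 1) (ht : 0 ≤ t) :
    loewnerParam c t ≠ -1 := by
  intro h
  have hc1 : (1 - c) ≠ 0 := by
    rintro h1; rw [loewnerParam, h1, div_zero] at h; norm_num at h
  rw [loewnerParam, div_eq_iff hc1] at h
  have hce : c = Real.exp (2 * t) := by rw [ofReal_sub, ofReal_one] at h; linear_combination -h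
  rw [hce, norm_real, Real.norm_of_nonneg (Real.exp_pos _).le] at hc
  linarith [Real.one_le_exp (by linarith : 0 ≤ 2 * t)]

end loewnerParam

lemma eventually_mem_ball_diff_and_ne_zero {f : ℂ → ℂ} (hf : AnalyticOnNhd ℂ f (ball 0 1))
    (hf0 : f 0 = 0) (hf' : ∀ z ∈ ball (0 : ℂ) 1, deriv f z ≠ 0) {z₀ : ℂ} (hz₀ : z₀ ∈ ball (0 : ℂ) 1) :
    ∀ᶠ z in 𝓝[≠] z₀, z ∈ ball (0 : ℂ) 1 \ {0} ∧ f z ≠ 0 := by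
  filter_upwards [nhdsWithin_le_nhds (isOpen_ball.mem_nhds hz₀),
    (hf z₀ hz₀).differentiableAt.hasDerivAt.eventually_ne (hf' z₀ hz₀) (c := 0)] with z hz hfz
  exact ⟨⟨hz, fun h0 => hfz (by rw [mem_singleton_iff.1 h0, hf0])⟩, hfz⟩

lemma continuousAt_mul_deriv_deriv_div_deriv {f : ℂ → ℂ} {z : ℂ} (hf : AnalyticAt ℂ f z)
    (hf' : deriv f z ≠ 0) : ContinuousAt (fun w => w * deriv (deriv f) w / deriv f w) z :=
  (continuousAt_id.mul hf.deriv.deriv.continuousAt).div hf.deriv.continuousAt hf'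

noncomputable def beckerExpr (c : ℂ) (f : ℂ → ℂ) (z : ℂ) : ℂ :=
  c * (‖z‖ : ℂ) ^ 2 - (1 - (‖z‖ : ℂ) ^ 2) * (z * deriv (deriv f) z / deriv f z)

section beckerExpr

variable {f : ℂ → ℂ} {c : ℂ} {k : ℝ}

lemma continuousAt_beckerExpr {z : ℂ} (hf : AnalyticAt ℂ f z) (hf' : deriv f z ≠ 0) :
    ContinuousAt (beckerExpr c f) z := by
  have := continuousAt_mul_deriv_deriv_div_deriv hf hf'
  unfold beckerExpr
  fun_prop

lemma norm_beckerExpr_le_of_ne_zero (hf : AnalyticOnNhd ℂ f (ball 0 1)) (hf0 : f 0 = 0)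
    (hf' : ∀ z ∈ ball (0 : ℂ) 1, deriv f z ≠ 0)
    (hb : ∀ z ∈ ball (0 : ℂ) 1 \ {0}, f z ≠ 0 → ‖beckerExpr c f z‖ ≤ k) :
    ∀ z ∈ ball (0 : ℂ) 1, ‖beckerExpr c f z‖ ≤ k := by
  intro z₀ hz₀
  have hcont := (continuousAt_beckerExpr (c := c) (hf z₀ hz₀) (hf' z₀ hz₀)).norm
  refine le_of_tendsto (x := 𝓝[≠] z₀) (hcont.tendsto.mono_left nhdsWithin_le_nhds) ?_
  filter_upwards [eventually_mem_ball_diff_and_ne_zero hf hf0 hf' hz₀] with z hz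
  exact hb z hz.1 hz.2

lemma exists_hasStrictDerivAt_invStarlikeRatio_re_neg (hk : k < 1) (hc : ‖c‖ ≤ k)
    (hf : AnalyticOnNhd ℂ f (ball 0 1)) (hf0 : f 0 = 0)
    (hf' : ∀ z ∈ ball (0 : ℂ) 1, deriv f z ≠ 0) {z : ℂ} {t : ℝ} (hz : z ∈ ball (0 : ℂ) 1)
    (hz0 : z ≠ 0) (hb : ‖beckerExpr c f z‖ ≤ k) (ht : 0 ≤ t) (hzt : ‖z‖ * Real.exp t < 1)
    (hq : invStarlikeRatio f z = -loewnerParam c t) :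
    ∃ D, HasStrictDerivAt (invStarlikeRatio f) D z ∧ D ≠ 0 ∧
      ((starRingEnd ℂ) z * (z + -(2 * Real.exp (2 * t) / (1 - c)) / D)).re < 0 := by
  set H := z * deriv (deriv f) z / deriv f z
  have hc1 : 1 - c ≠ 0 := by
    rintro h; rw [← eq_of_sub_eq_zero h, norm_one] at hc; linarith
  have hEx : Real.exp (2 * t) * ‖z‖ ^ 2 < 1 := by
    have : Real.exp (2 * t) = Real.exp t ^ 2 := by rw [← Real.exp_nat_mul]; norm_num
    rw [this, ← mul_pow, mul_comm]
    nlinarith [mul_nonneg (norm_nonneg z) (Real.exp_pos t).le]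
  have hre := one_lt_re_two_mul_div_of_norm_le (H := H) hc hk (Real.one_le_exp (by linarith)) hEx
    (by simpa [beckerExpr] using hb)
  set Dn := (1 - c) + (Real.exp (2 * t) - 1) * (1 + H) with hDn_def
  have hDn : Dn ≠ 0 := by
    intro h; rw [h, div_zero, zero_re] at hre; linarith
  have hD : (1 - invStarlikeRatio f z * (1 + H)) / z = Dn / ((1 - c) * z) := by
    rw [hq, loewnerParam, ofReal_sub, ofReal_one, hDn_def]; field_simp; ring
  refine ⟨_, hasStrictDerivAt_invStarlikeRatio hf hf0 hf' hz hz0, ?_, ?_⟩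
  · rw [hD]; exact div_ne_zero hDn (mul_ne_zero hc1 hz0)
  · have hconj : (starRingEnd ℂ) z * (z + -(2 * Real.exp (2 * t) / (1 - c)) / (Dn / ((1 - c) * z)))
        = ((‖z‖ ^ 2 : ℝ) : ℂ) * (1 - 2 * Real.exp (2 * t) / Dn) := by
      rw [ofReal_pow, ← conj_mul']; field_simp; ring
    rw [hD, hconj, re_ofReal_mul, sub_re, one_re]
    have : 0 < ‖z‖ ^ 2 := by positivity
    nlinarith

theorem ne_zero_of_forall_norm_beckerExpr_le (hk : k < 1) (hf : AnalyticOnNhd ℂ f (ball 0 1))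
    (hf0 : f 0 = 0) (hf'0 : deriv f 0 = 1) (hf' : ∀ z ∈ ball (0 : ℂ) 1, deriv f z ≠ 0)
    (hb : ∀ z ∈ ball (0 : ℂ) 1, ‖beckerExpr c f z‖ ≤ k) {z₁ : ℂ} (hz₁ : z₁ ∈ ball (0 : ℂ) 1)
    (hz₁0 : z₁ ≠ 0) : f z₁ ≠ 0 := by
  intro hfz₁
  have hc : ‖c‖ ≤ k := norm_le_of_forall_norm_mul_sq_sub_le
    ((differentiableOn_id.mul hf.deriv.deriv.differentiableOn).div hf.deriv.differentiableOn hf')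
    (by simp) hb
  have hc1 : c ≠ 1 := by rintro rfl; rw [norm_one] at hc; linarith
  have hρ : ‖z₁‖ < 1 := mem_ball_zero_iff.1 hz₁
  set K := {p : ℝ × ℂ | 0 ≤ p.1 ∧ ‖p.2‖ * Real.exp p.1 ≤ ‖z₁‖} ∩
    {p | invStarlikeRatio f p.2 = -loewnerParam c p.1}
  have hK : IsCompact K := isCompact_setOf_norm_mul_exp_le_and_eq
    ((continuousOn_invStarlikeRatio hf hf').mono (closedBall_subset_ball hρ))
    (continuous_loewnerParam c).neg (by simpa using tendsto_norm_loewnerParam hc1)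
  have hz₁K : (0, z₁) ∈ K :=
    ⟨⟨le_rfl, by simp⟩, by simp [loewnerParam, invStarlikeRatio_of_ne_zero hf0 hz₁0, hfz₁]⟩
  obtain ⟨⟨t₀, z₀⟩, ⟨⟨ht₀, hz₀t₀⟩, hqz₀⟩, hmax⟩ :=
    hK.exists_isMaxOn ⟨_, hz₁K⟩ continuous_fst.continuousOn
  replace hqz₀ : invStarlikeRatio f z₀ = -loewnerParam c t₀ := hqz₀
  have hz₀1 : ‖z₀‖ * Real.exp t₀ < 1 := hz₀t₀.trans_lt hρ
  have hz₀ : z₀ ∈ ball (0 : ℂ) 1 := mem_ball_zero_iff.2 <|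
    (le_mul_of_one_le_right (norm_nonneg _) (Real.one_le_exp ht₀)).trans_lt hz₀1
  have hz₀0 : z₀ ≠ 0 := by
    intro h0
    rw [h0, invStarlikeRatio_zero hf'0] at hqz₀
    exact loewnerParam_ne_neg_one hc hk ht₀ (by linear_combination hqz₀)
  obtain ⟨D, hD, hD0, hre⟩ := exists_hasStrictDerivAt_invStarlikeRatio_re_neg hk hc hf hf0 hf'
    hz₀ hz₀0 (hb z₀ hz₀) ht₀ hz₀1 hqz₀
  obtain ⟨t, ⟨z, hz, hqz⟩, ht⟩ := ((hD.eventually_exists_norm_mul_exp_lt hD0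
    (hasDerivAt_loewnerParam c t₀).neg hqz₀ hre).and self_mem_nhdsWithin).exists
  exact (isMaxOn_iff.1 hmax (t, z) ⟨⟨ht₀.trans ht.le, hz.le.trans hz₀t₀⟩, hqz⟩).not_gt ht

end beckerExpr

noncomputable def ruscheweyhExpr (a : ℝ) (c s : ℂ) (f : ℂ → ℂ) (z : ℂ) : ℂ :=
  c * (‖z‖ : ℂ) ^ 2 + s - (a : ℂ) * (1 - (‖z‖ : ℂ) ^ 2) *
    (s * (1 + z * deriv (deriv f) z / deriv f z) + (1 - s) * (z * deriv f z / f z))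

lemma ruscheweyhExpr_one_one (c : ℂ) (f : ℂ → ℂ) (z : ℂ) :
    ruscheweyhExpr 1 c 1 f z = beckerExpr (c + 1) f z := by
  simp only [ruscheweyhExpr, beckerExpr, ofReal_one]
  ring

lemma not_eventually_norm_ruscheweyhExpr_le {a : ℝ} {c s : ℂ} {f : ℂ → ℂ} {z₁ : ℂ} (M : ℝ)
    (ha : a ≠ 0) (hs : s ≠ 1) (hf : AnalyticAt ℂ f z₁) (hfz₁ : f z₁ = 0) (hd : deriv f z₁ ≠ 0)
    (hz₁ : ‖z₁‖ < 1) (hz₁0 : z₁ ≠ 0) :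
    ¬ ∀ᶠ z in 𝓝[≠] z₁, ‖ruscheweyhExpr a c s f z‖ ≤ M := by
  intro hbound
  set P : ℂ → ℂ := fun z =>
    c * (‖z‖ : ℂ) ^ 2 + s - a * (1 - (‖z‖ : ℂ) ^ 2) * (s * (1 + z * deriv (deriv f) z / deriv f z))
  set Q : ℂ → ℂ := fun z => a * (1 - (‖z‖ : ℂ) ^ 2) * (1 - s) * z
  have hsplit : ∀ z, (z - z₁) * ruscheweyhExpr a c s f z
      = (z - z₁) * P z - Q z * ((z - z₁) * (deriv f z / f z)) := fun z => by
    simp only [ruscheweyhExpr, P, Q]; ring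
  have hsub : Tendsto (fun z => z - z₁) (𝓝[≠] z₁) (𝓝 0) :=
    tendsto_nhdsWithin_of_tendsto_nhds (by simpa using (continuous_sub_right z₁).tendsto z₁)
  have hP : ContinuousAt P z₁ := by
    have := continuousAt_mul_deriv_deriv_div_deriv hf hd
    fun_prop
  have hQ : ContinuousAt Q z₁ := by fun_prop
  have hlim : Tendsto (fun z => (z - z₁) * ruscheweyhExpr a c s f z) (𝓝[≠] z₁)
      (𝓝 (0 * P z₁ - Q z₁ * 1)) := by
    simp_rw [hsplit]
    exact (hsub.mul (hP.tendsto.mono_left nhdsWithin_le_nhds)).sub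
      ((hQ.tendsto.mono_left nhdsWithin_le_nhds).mul
        (tendsto_sub_mul_deriv_div_of_simple_zero hf hfz₁ hd))
  have hlim₀ : Tendsto (fun z => (z - z₁) * ruscheweyhExpr a c s f z) (𝓝[≠] z₁) (𝓝 0) :=
    hsub.zero_mul_isBoundedUnder_le ⟨M, hbound⟩
  have hQ₁ : Q z₁ ≠ 0 := by
    have h1 : (1 : ℂ) - (‖z₁‖ : ℂ) ^ 2 ≠ 0 := by
      norm_cast
      nlinarith [norm_nonneg z₁]
    have ha' : (a : ℂ) ≠ 0 := by exact_mod_cast ha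
    exact mul_ne_zero (mul_ne_zero (mul_ne_zero ha' h1) (sub_ne_zero.2 hs.symm)) hz₁0
  exact hQ₁ (by simpa using tendsto_nhds_unique hlim hlim₀)

theorem ruscheweyh_nonvanishing_general
    (a b k : ℝ) (ha : 0 < a) (hk1 : k < 1)
    (c s : ℂ) (hs : s = (a : ℂ) + (b : ℂ) * Complex.I)
    (M : ℝ)
    (hM : M = if a ≤ 1 then a * k * ‖s‖ + (a - 1) * ‖s + c‖
              else k * ‖s‖)
    (f : ℂ → ℂ)
    (hf : AnalyticOnNhd ℂ f (ball 0 1)) (hf0 : f 0 = 0) (hf'0 : deriv f 0 = 1)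
    (hf' : ∀ z ∈ ball (0 : ℂ) 1, deriv f z ≠ 0)
    (hineq : ∀ z ∈ ball (0 : ℂ) 1 \ {0}, f z ≠ 0 →
      ‖c * (‖z‖ : ℂ) ^ 2 + s
        - (a : ℂ) * (1 - (‖z‖ : ℂ) ^ 2) *
          (s * (1 + z * deriv (deriv f) z / deriv f z)
            + (1 - s) * (z * deriv f z / f z))‖ ≤ M) :
    ∀ z ∈ ball (0 : ℂ) 1 \ {0}, f z ≠ 0 := by
  rintro z₁ ⟨hz₁, hz₁0⟩ hfz₁
  rcases eq_or_ne s 1 with rfl | hs1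
  · obtain rfl : a = 1 := by simpa using (congrArg re hs).symm
    have hMk : M = k := by simp [hM]
    refine ne_zero_of_forall_norm_beckerExpr_le (c := c + 1) hk1 hf hf0 hf'0 hf'
      (norm_beckerExpr_le_of_ne_zero hf hf0 hf' fun z hz hfz => ?_) hz₁ hz₁0 hfz₁
    rw [← ruscheweyhExpr_one_one, ← hMk]
    exact hineq z hz hfz
  · refine not_eventually_norm_ruscheweyhExpr_le (c := c) M ha.ne' hs1 (hf z₁ hz₁) hfz₁ (hf' z₁ hz₁)
      (mem_ball_zero_iff.1 hz₁) hz₁0 ?_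
    filter_upwards [eventually_mem_ball_diff_and_ne_zero hf hf0 hf' hz₁] with z hz
    exact hineq z hz.1 hz.2

theorem ruscheweyh_nonvanishing
    (a b k : ℝ) (ha : 0 < a) (hk0 : 0 ≤ k) (hk1 : k < 1)
    (c s : ℂ) (hs : s = (a : ℂ) + (b : ℂ) * Complex.I)
    (M : ℝ)
    (hM : M = if a ≤ 1 then a * k * ‖s‖ + (a - 1) * ‖s + c‖
              else k * ‖s‖)
    (f : ℂ → ℂ)
    (hf : AnalyticOnNhd ℂ f (ball 0 1)) (hf0 : f 0 = 0) (hf'0 : deriv f 0 = 1)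
    (hf' : ∀ z ∈ ball (0 : ℂ) 1, deriv f z ≠ 0)
    (hineq : ∀ z ∈ ball (0 : ℂ) 1 \ {0}, f z ≠ 0 →
      ‖c * (‖z‖ : ℂ) ^ 2 + s
        - (a : ℂ) * (1 - (‖z‖ : ℂ) ^ 2) *
          (s * (1 + z * deriv (deriv f) z / deriv f z)
            + (1 - s) * (z * deriv f z / f z))‖ ≤ M) :
    ∀ z ∈ ball (0 : ℂ) 1 \ {0}, f z ≠ 0 :=
  ruscheweyh_nonvanishing_general a b k ha hk1 c s hs M hM f hf hf0 hf'0 hf' hineq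
end

section
/- Let s = a + ib with a > 0 and b real, let k ∈ [0,1), and let c be a complex constant, with M = a·k·|s| + (a−1)·|s+c| if 0 < a ≤ 1 and M = k·|s| if a > 1. Let f ∈ 𝒜 with f'(z) ≠ 0 for all z in 𝔻 and f(z) ≠ 0 for all z ∈ 𝔻 \ {0}, and assume |c|z|² + s − a(1−|z|²)·H_s(z)| ≤ M for all z ∈ 𝔻 \ {0}, where H_s(z) = s(1 + z f''(z)/f'(z)) + (1−s)·z f'(z)/f(z). Define P(z,t) = (c/a)·e^{−2t} + 1 + (e^{−2t} − 1)·H_s(z). Then for all z ∈ 𝔻 \ {0} and all t ∈ [0,∞), one has |a·P(e^{−st/|s|} z, t/|s|) + i b| ≤ k·|s|. -/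
/-!
Put `A = s + c` and `G = c + a H`, so that the hypothesis reads `‖A - (1 - |w|²) G w‖ ≤ M` and
`a P(w, τ) + i b = A - (1 - e^{-2τ}) G w`. For `τ = t / |s|` and `w = e^{-sτ} z` we have
`|w|² ≤ e^{-2aτ}`, and `A - (1 - e^{-2τ}) G w` is the affine combination
`l (A - (1 - |w|²) G w) + (1 - l) A` with `l = (1 - e^{-2τ}) / (1 - |w|²)`; convexity of `exp`
gives `min a 1 * l ≤ 1`, which together with the shape of `M` yields the bound `k |s|` once
`‖A‖ ≤ M` is known.

That last bound follows by letting `w` approach the unit circle, provided `(1 - |w|²) |G w|`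
becomes arbitrarily small. This holds for every `G` holomorphic near the circle: otherwise `1 / G`
would be `O(1 - |w|²)`, and the maximum principle for `v ^ n / G v` on annuli forces `1 / G = 0`.
-/

open Metric Set Filter Topology

theorem norm_le_of_forall_mem_sphere_norm_le_annulus {F : Type*} [NormedAddCommGroup F]
    [NormedSpace ℂ F] {φ : ℂ → F} {ρ r C : ℝ} (hr : 0 < r)
    (hφ : DiffContOnCl ℂ φ (ball 0 r \ closedBall 0 ρ))
    (hC : ∀ w ∈ sphere (0 : ℂ) ρ ∪ sphere 0 r, ‖φ w‖ ≤ C) {w : ℂ}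
    (hw : w ∈ ball (0 : ℂ) r \ closedBall 0 ρ) : ‖φ w‖ ≤ C := by
  have hfrontier : frontier (ball (0 : ℂ) r \ closedBall 0 ρ) ⊆ sphere 0 ρ ∪ sphere 0 r := by
    rw [sdiff_eq]
    refine (frontier_inter_subset _ _).trans ?_
    rw [frontier_compl, frontier_ball _ hr.ne', frontier_closedBall']
    exact union_subset (inter_subset_left.trans subset_union_right)
      (inter_subset_right.trans subset_union_left)
  exact Complex.norm_le_of_forall_mem_frontier_norm_le (isBounded_ball.subset sdiff_subset) hφ
    (fun z hz => hC z (hfrontier hz)) (subset_closure hw)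

-- Maximum modulus for `h v * v ^ n` on `ρ < ‖v‖ < r`: the weight is small on the inner circle,
-- and `h` is small on the outer one once `r` is close to `1`.
theorem norm_mul_pow_le_of_norm_le_mul_one_sub_sq {R C ρ : ℝ} (hR : 0 ≤ R) (hRρ : R < ρ)
    (hC : 0 ≤ C) {h : ℂ → ℂ} (hh : DifferentiableOn ℂ h (ball 0 1 \ closedBall 0 R))
    (hle : ∀ w ∈ ball (0 : ℂ) 1 \ closedBall 0 R, ‖h w‖ ≤ C * (1 - ‖w‖ ^ 2))
    {w : ℂ} (hρw : ρ < ‖w‖) (hw1 : ‖w‖ < 1) (n : ℕ) :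
    ‖h w‖ * ‖w‖ ^ n ≤ C * ρ ^ n := by
  have hρ0 : 0 < ρ := hR.trans_lt hRρ
  have hmem : ∀ v : ℂ, ρ ≤ ‖v‖ → ‖v‖ < 1 → v ∈ ball (0 : ℂ) 1 \ closedBall 0 R :=
    fun v hρv hv1 => ⟨mem_ball_zero_iff.2 hv1, fun hv => (hRρ.trans_le hρv).not_ge
      (mem_closedBall_zero_iff.1 hv)⟩
  have hnear : ∀ᶠ r in 𝓝 (1 : ℝ), 1 - r ^ 2 < ρ ^ n := by
    have : Tendsto (fun r : ℝ => 1 - r ^ 2) (𝓝 1) (𝓝 0) :=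
      (by fun_prop : Continuous fun r : ℝ => 1 - r ^ 2).tendsto' 1 0 (by norm_num)
    exact this.eventually (eventually_lt_nhds (pow_pos hρ0 n))
  obtain ⟨r, ⟨hwr, hr1⟩, hr⟩ :=
    (Filter.Eventually.and (Ioo_mem_nhdsLT hw1) (nhdsWithin_le_nhds hnear)).exists
  have hr0 : 0 < r := hρ0.trans (hρw.trans hwr)
  have hcl : closure (ball (0 : ℂ) r \ closedBall 0 ρ) ⊆ ball 0 1 \ closedBall 0 R := by
    refine (closure_minimal (t := norm ⁻¹' Icc ρ r) ?_
      (isClosed_Icc.preimage continuous_norm)).trans ?_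
    · exact fun v hv => ⟨(not_le.1 (mt mem_closedBall_zero_iff.2 hv.2)).le,
        (mem_ball_zero_iff.1 hv.1).le⟩
    · exact fun v hv => hmem v hv.1 (hv.2.trans_lt hr1)
  refine norm_le_of_forall_mem_sphere_norm_le_annulus (φ := fun v => h v * v ^ n) hr0
    (((hh.mul (differentiableOn_pow n)).mono hcl).diffContOnCl)
    ?_ ⟨mem_ball_zero_iff.2 hwr, fun hv => hρw.not_ge (mem_closedBall_zero_iff.1 hv)⟩
    |>.trans_eq' (by simp [norm_pow])
  rintro v (hv | hv) <;> rw [mem_sphere_zero_iff_norm] at hv <;> rw [norm_mul, norm_pow, hv]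
  · have hhv := hle v (hmem v hv.ge (hv ▸ hρw.trans hw1))
    rw [hv] at hhv
    calc ‖h v‖ * ρ ^ n ≤ C * (1 - ρ ^ 2) * ρ ^ n := by gcongr
      _ ≤ C * ρ ^ n := by nlinarith [mul_nonneg hC (mul_nonneg (sq_nonneg ρ) (pow_pos hρ0 n).le)]
  · have hhv := hle v (hmem v (hv ▸ (hρw.trans hwr).le) (hv ▸ hr1))
    rw [hv] at hhv
    calc ‖h v‖ * r ^ n ≤ C * (1 - r ^ 2) * 1 :=
          mul_le_mul hhv (pow_le_one₀ hr0.le hr1.le) (by positivity) ((norm_nonneg _).trans hhv)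
      _ ≤ C * ρ ^ n := by nlinarith

theorem eqOn_zero_of_norm_le_mul_one_sub_sq {R C : ℝ} (hR : 0 ≤ R) {h : ℂ → ℂ}
    (hh : DifferentiableOn ℂ h (ball 0 1 \ closedBall 0 R))
    (hle : ∀ w ∈ ball (0 : ℂ) 1 \ closedBall 0 R, ‖h w‖ ≤ C * (1 - ‖w‖ ^ 2)) :
    EqOn h 0 (ball 0 1 \ closedBall 0 R) := by
  intro w hw
  have hw1 : ‖w‖ < 1 := mem_ball_zero_iff.1 hw.1
  have hRw : R < ‖w‖ := not_le.1 (mt mem_closedBall_zero_iff.2 hw.2)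
  have hC : 0 ≤ C := nonneg_of_mul_nonneg_left ((norm_nonneg _).trans (hle w hw))
    (by nlinarith [norm_nonneg w])
  obtain ⟨ρ, hRρ, hρw⟩ := exists_between hRw
  have hρ0 : 0 < ρ := hR.trans_lt hRρ
  have hw0 : 0 < ‖w‖ := hρ0.trans hρw
  have hlim : Tendsto (fun n : ℕ => C * (ρ / ‖w‖) ^ n) atTop (𝓝 0) := by
    simpa using (tendsto_pow_atTop_nhds_zero_of_lt_one (div_nonneg hρ0.le hw0.le)
      ((div_lt_one hw0).2 hρw)).const_mul C
  refine norm_le_zero_iff.1 (ge_of_tendsto' hlim fun n => ?_)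
  rw [div_pow, mul_div_assoc', le_div_iff₀ (pow_pos hw0 n)]
  exact norm_mul_pow_le_of_norm_le_mul_one_sub_sq hR hRρ hC hh hle hρw hw1 n

theorem exists_one_sub_sq_mul_norm_lt {R ε : ℝ} (hR0 : 0 ≤ R) (hR1 : R < 1) (hε : 0 < ε)
    {g : ℂ → ℂ} (hg : DifferentiableOn ℂ g (ball 0 1 \ closedBall 0 R)) :
    ∃ w ∈ ball (0 : ℂ) 1 \ closedBall 0 R, (1 - ‖w‖ ^ 2) * ‖g w‖ < ε := by
  by_contra! hlow
  have hne : ∀ w ∈ ball (0 : ℂ) 1 \ closedBall 0 R, g w ≠ 0 := fun w hw hgw => by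
    simpa [hgw, not_le.2 hε] using hlow w hw
  have hinv : ∀ w ∈ ball (0 : ℂ) 1 \ closedBall 0 R, ‖(g w)⁻¹‖ ≤ ε⁻¹ * (1 - ‖w‖ ^ 2) := by
    intro w hw
    rw [norm_inv, inv_mul_eq_div, inv_le_iff_one_le_mul₀ (norm_pos_iff.2 (hne w hw)),
      div_mul_eq_mul_div, one_le_div hε]
    exact hlow w hw
  obtain ⟨x, hRx, hx1⟩ := exists_between hR1
  have hx : (x : ℂ) ∈ ball (0 : ℂ) 1 \ closedBall 0 R := by
    have hx0 : ‖(x : ℂ)‖ = x := by simp [abs_of_pos (hR0.trans_lt hRx)]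
    rw [Set.mem_sdiff, mem_ball_zero_iff, mem_closedBall_zero_iff, hx0]
    exact ⟨hx1, not_le.2 hRx⟩
  exact hne _ hx (inv_eq_zero.1 (eqOn_zero_of_norm_le_mul_one_sub_sq hR0 (hg.inv hne) hinv hx))

theorem norm_le_of_forall_norm_sub_one_sub_sq_smul_le {R M : ℝ} (hR0 : 0 ≤ R) (hR1 : R < 1)
    {g : ℂ → ℂ} (hg : DifferentiableOn ℂ g (ball 0 1 \ closedBall 0 R)) (A : ℂ)
    (hle : ∀ w ∈ ball (0 : ℂ) 1 \ closedBall 0 R, ‖A - (1 - ‖w‖ ^ 2) • g w‖ ≤ M) :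
    ‖A‖ ≤ M := by
  refine le_of_forall_pos_le_add fun ε hε => ?_
  obtain ⟨w, hw, hwε⟩ := exists_one_sub_sq_mul_norm_lt hR0 hR1 hε hg
  have hw1 : 0 ≤ 1 - ‖w‖ ^ 2 := by nlinarith [mem_ball_zero_iff.1 hw.1, norm_nonneg w]
  calc ‖A‖ ≤ ‖A - (1 - ‖w‖ ^ 2) • g w‖ + ‖(1 - ‖w‖ ^ 2) • g w‖ := norm_le_norm_sub_add _ _
    _ ≤ M + ε := by
      gcongr
      · exact hle w hw
      · rw [norm_smul, Real.norm_of_nonneg hw1]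
        exact hwε.le

theorem norm_sub_smul_le {E : Type*} [SeminormedAddCommGroup E] [NormedSpace ℝ E] (A G : E)
    {t u : ℝ} (hu : u ≠ 0) :
    ‖A - t • G‖ ≤ |t / u| * ‖A - u • G‖ + |1 - t / u| * ‖A‖ := by
  have hsplit : A - t • G = (t / u) • (A - u • G) + (1 - t / u) • A := by
    rw [smul_sub, smul_smul, div_mul_cancel₀ t hu, sub_smul, one_smul]
    abel
  rw [hsplit]
  refine (norm_add_le _ _).trans_eq ?_
  rw [norm_smul, norm_smul, Real.norm_eq_abs, Real.norm_eq_abs]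

theorem min_mul_one_sub_exp_neg_le {a x : ℝ} (ha : 0 ≤ a) (hx : 0 ≤ x) :
    min a 1 * (1 - Real.exp (-x)) ≤ 1 - Real.exp (-(a * x)) := by
  rcases le_total a 1 with ha1 | ha1
  · rw [min_eq_left ha1]
    have := convexOn_exp.2 (mem_univ (-x)) (mem_univ 0) ha (sub_nonneg.2 ha1) (by ring)
    simp only [smul_eq_mul, mul_zero, add_zero, Real.exp_zero, mul_one, mul_neg] at this
    linarith
  · rw [min_eq_right ha1, one_mul]
    gcongr
    nlinarith

theorem mul_add_abs_one_sub_mul_le {a K C M l : ℝ} (ha : 0 < a) (hC : 0 ≤ C)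
    (hal : min a 1 * l ≤ 1) (hM : M = if a ≤ 1 then a * K + (a - 1) * C else K)
    (hCM : C ≤ M) : l * M + |1 - l| * C ≤ K := by
  split_ifs at hM with ha1
  · rw [min_eq_left ha1] at hal
    subst hM
    rcases abs_cases (1 - l) with ⟨habs, -⟩ | ⟨habs, -⟩ <;> rw [habs] <;> nlinarith
  · rw [min_eq_right (not_le.1 ha1).le, one_mul] at hal
    rw [abs_of_nonneg (sub_nonneg.2 hal)]
    nlinarith

theorem norm_sub_smul_exp_mul_le {a K M : ℝ} {s A : ℂ} {G : ℂ → ℂ} (ha : 0 < a) (hsa : s.re = a)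
    (hG : DifferentiableOn ℂ G (ball 0 1 \ {0}))
    (hM : M = if a ≤ 1 then a * K + (a - 1) * ‖A‖ else K)
    (hle : ∀ w ∈ ball (0 : ℂ) 1 \ {0}, ‖A - (1 - ‖w‖ ^ 2) • G w‖ ≤ M)
    {z : ℂ} (hz : z ∈ ball (0 : ℂ) 1 \ {0}) {τ : ℝ} (hτ : 0 ≤ τ) :
    ‖A - (1 - Real.exp (-2 * τ)) • G (Complex.exp (-s * τ) * z)‖ ≤ K := by
  rw [← closedBall_zero] at hG hle
  have hA : ‖A‖ ≤ M := norm_le_of_forall_norm_sub_one_sub_sq_smul_le le_rfl one_pos hG A hle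
  rw [closedBall_zero] at hle
  set w := Complex.exp (-s * τ) * z
  have hz1 : ‖z‖ < 1 := mem_ball_zero_iff.1 hz.1
  have hw : ‖w‖ = Real.exp (-(a * τ)) * ‖z‖ := by simp [w, Complex.norm_exp, hsa]
  have hwz : ‖w‖ ≤ ‖z‖ := by
    rw [hw]
    exact mul_le_of_le_one_left (norm_nonneg z) (Real.exp_le_one_iff.2 (by nlinarith))
  have hw1 : ‖w‖ ^ 2 < 1 := by nlinarith [norm_nonneg w]
  have hwexp : ‖w‖ ^ 2 ≤ Real.exp (-(a * (2 * τ))) := by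
    calc ‖w‖ ^ 2 = Real.exp (-(a * τ)) ^ 2 * ‖z‖ ^ 2 := by rw [hw, mul_pow]
      _ ≤ Real.exp (-(a * τ)) ^ 2 * 1 :=
        mul_le_mul_of_nonneg_left (by nlinarith [norm_nonneg z]) (by positivity)
      _ = Real.exp (-(a * (2 * τ))) := by rw [mul_one, ← Real.exp_nat_mul]; ring_nf
  have hwmem : w ∈ ball (0 : ℂ) 1 \ {0} :=
    ⟨mem_ball_zero_iff.2 (hwz.trans_lt hz1), by simpa [w, Complex.exp_ne_zero] using hz.2⟩
  set l := (1 - Real.exp (-2 * τ)) / (1 - ‖w‖ ^ 2)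
  have hl : min a 1 * l ≤ 1 := by
    rw [mul_div_assoc', div_le_one (by linarith)]
    have := min_mul_one_sub_exp_neg_le ha.le (by linarith : 0 ≤ 2 * τ)
    rw [neg_mul]
    linarith
  have hl0 : 0 ≤ l := div_nonneg (sub_nonneg.2 (Real.exp_le_one_iff.2 (by linarith))) (by linarith)
  calc _ ≤ |l| * ‖A - (1 - ‖w‖ ^ 2) • G w‖ + |1 - l| * ‖A‖ := norm_sub_smul_le _ _ (by linarith)
    _ ≤ l * M + |1 - l| * ‖A‖ := by
      rw [abs_of_nonneg hl0]
      gcongr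
      exact hle w hwmem
    _ ≤ K := mul_add_abs_one_sub_mul_le ha (norm_nonneg A) hl hM hA

theorem analyticOnNhd_mixed_logDeriv (s : ℂ) {f : ℂ → ℂ} {U : Set ℂ} (hf : AnalyticOnNhd ℂ f U)
    (hf' : ∀ z ∈ U, deriv f z ≠ 0) (hf0 : ∀ z ∈ U, f z ≠ 0) :
    AnalyticOnNhd ℂ (fun z => s * (1 + z * deriv (deriv f) z / deriv f z)
      + (1 - s) * (z * deriv f z / f z)) U :=
  (analyticOnNhd_const.mul (analyticOnNhd_const.add
    ((analyticOnNhd_id.mul hf.deriv.deriv).div hf.deriv hf'))).add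
  (analyticOnNhd_const.mul ((analyticOnNhd_id.mul hf.deriv).div hf hf0))

theorem ruscheweyh_disk_bound_general
    (a b k : ℝ) (ha : 0 < a)
    (c s : ℂ) (hs : s = (a : ℂ) + (b : ℂ) * Complex.I)
    (M : ℝ)
    (hM : M = if a ≤ 1 then a * k * ‖s‖ + (a - 1) * ‖s + c‖
              else k * ‖s‖)
    (f : ℂ → ℂ)
    (hf : AnalyticOnNhd ℂ f (ball 0 1))
    (hf' : ∀ z ∈ ball (0 : ℂ) 1, deriv f z ≠ 0)
    (hfz : ∀ z ∈ ball (0 : ℂ) 1 \ {0}, f z ≠ 0)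
    (H : ℂ → ℂ)
    (hH : H = fun z => s * (1 + z * deriv (deriv f) z / deriv f z)
            + (1 - s) * (z * deriv f z / f z))
    (P : ℂ → ℝ → ℂ)
    (hP : P = fun z t => c / (a : ℂ) * (Real.exp (-2 * t) : ℂ) + 1
            + ((Real.exp (-2 * t) : ℂ) - 1) * H z)
    (hineq : ∀ z ∈ ball (0 : ℂ) 1 \ {0},
      ‖c * (‖z‖ : ℂ) ^ 2 + s
        - (a : ℂ) * (1 - (‖z‖ : ℂ) ^ 2) * H z‖ ≤ M) :
    ∀ z ∈ ball (0 : ℂ) 1 \ {0}, ∀ t : ℝ, 0 ≤ t →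
      ‖(a : ℂ) *
          P (Complex.exp (-s * (t : ℂ) / (‖s‖ : ℂ)) * z) (t / ‖s‖)
        + Complex.I * (b : ℂ)‖ ≤ k * ‖s‖ := by
  intro z hz t ht
  have hsa : s.re = a := by simp [hs]
  have hs0 : 0 < ‖s‖ := norm_pos_iff.2 fun h => by simp [h] at hsa; linarith
  set G : ℂ → ℂ := fun w => c + a * H w
  have hG : DifferentiableOn ℂ G (ball 0 1 \ {0}) := by
    refine (analyticOnNhd_const.add (analyticOnNhd_const.mul ?_)).differentiableOn
    exact hH ▸ analyticOnNhd_mixed_logDeriv s (hf.mono sdiff_subset) (fun w hw => hf' w hw.1) hfz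
  have hG_eq : ∀ w (x : ℝ), c * (x : ℂ) + s - a * (1 - x) * H w = (s + c) - (1 - x) • G w := by
    intro w x
    rw [Complex.real_smul]
    push_cast
    ring
  have hP_eq : ∀ w (x : ℝ),
      (a : ℂ) * P w x + Complex.I * b = (s + c) - (1 - Real.exp (-2 * x)) • G w := by
    intro w x
    have ha0 : (a : ℂ) ≠ 0 := Complex.ofReal_ne_zero.2 ha.ne'
    rw [← hG_eq, hP, hs]
    field_simp
    ring
  have harg : -s * t / ‖s‖ = -s * ((t / ‖s‖ : ℝ) : ℂ) := by push_cast; ring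
  rw [harg, hP_eq]
  refine norm_sub_smul_exp_mul_le (A := s + c) (K := k * ‖s‖) (M := M) ha hsa hG
    (by rw [hM, mul_assoc]) (fun w hw => ?_) hz (div_nonneg ht hs0.le)
  rw [← hG_eq]
  push_cast
  exact hineq w hw

theorem ruscheweyh_disk_bound
    (a b k : ℝ) (ha : 0 < a) (hk0 : 0 ≤ k) (hk1 : k < 1)
    (c s : ℂ) (hs : s = (a : ℂ) + (b : ℂ) * Complex.I)
    (M : ℝ)
    (hM : M = if a ≤ 1 then a * k * ‖s‖ + (a - 1) * ‖s + c‖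
              else k * ‖s‖)
    (f : ℂ → ℂ)
    (hf : AnalyticOnNhd ℂ f (ball 0 1)) (hf0 : f 0 = 0) (hf'0 : deriv f 0 = 1)
    (hf' : ∀ z ∈ ball (0 : ℂ) 1, deriv f z ≠ 0)
    (hfz : ∀ z ∈ ball (0 : ℂ) 1 \ {0}, f z ≠ 0)
    (H : ℂ → ℂ)
    (hH : H = fun z => s * (1 + z * deriv (deriv f) z / deriv f z)
            + (1 - s) * (z * deriv f z / f z))
    (P : ℂ → ℝ → ℂ)
    (hP : P = fun z t => c / (a : ℂ) * (Real.exp (-2 * t) : ℂ) + 1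
            + ((Real.exp (-2 * t) : ℂ) - 1) * H z)
    (hineq : ∀ z ∈ ball (0 : ℂ) 1 \ {0},
      ‖c * (‖z‖ : ℂ) ^ 2 + s
        - (a : ℂ) * (1 - (‖z‖ : ℂ) ^ 2) * H z‖ ≤ M) :
    ∀ z ∈ ball (0 : ℂ) 1 \ {0}, ∀ t : ℝ, 0 ≤ t →
      ‖(a : ℂ) *
          P (Complex.exp (-s * (t : ℂ) / (‖s‖ : ℂ)) * z) (t / ‖s‖)
        + Complex.I * (b : ℂ)‖ ≤ k * ‖s‖ :=
  ruscheweyh_disk_bound_general a b k ha c s hs M hM f hf hf' hfz H hH P hP hineq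
end

section
/- Let s = a + ib with a > 0 and b real, let k ∈ [0,1), and let c be a complex constant, with M = a·k·|s| + (a−1)·|s+c| if 0 < a ≤ 1 and M = k·|s| if a > 1. Let f ∈ 𝒜 with f'(z) ≠ 0 for all z in 𝔻 and f(z) ≠ 0 for all z ∈ 𝔻 \ {0}, and assume |c|z|² + s − a(1−|z|²)·[s(1 + z f''(z)/f'(z)) + (1−s)·z f'(z)/f(z)]| ≤ M for all z ∈ 𝔻 \ {0}. Then for every r ∈ (0,1), the function f_r defined by f_r(z) = f(rz)/r belongs to 𝒜 and satisfies the same inequality: |c|z|² + s − a(1−|z|²)·[s(1 + z f_r''(z)/f_r'(z)) + (1−s)·z f_r'(z)/f_r(z)]| ≤ M for all z ∈ 𝔻 \ {0}. -/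
/-!
The bracket `J(f, z) = s (1 + z f''/f') + (1 - s) z f'/f` satisfies `J(f_r, z) = J(f, r z)`. It
extends holomorphically to the whole disk, since `z f'/f = f' / dslope f 0` and `dslope f 0`
vanishes nowhere (at the origin it equals `f'(0)`). So for fixed `ρ = ‖z‖` the expression
`c ρ² + s - a (1 - ρ²) J(f, ζ)` is holomorphic in `ζ` and bounded by `M` on the circle `‖ζ‖ = ρ`;
by the maximum modulus principle it is bounded by `M` at `ζ = r z`, which is the claim for `f_r`.
-/

open Metric Set

noncomputable def ruscheweyhTerm (s : ℂ) (f : ℂ → ℂ) (z : ℂ) : ℂ :=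
  s * (1 + z * deriv (deriv f) z / deriv f z) + (1 - s) * (z * deriv f z / f z)

theorem deriv_dilation {r : ℂ} (hr : r ≠ 0) (f : ℂ → ℂ) :
    deriv (fun z => f (r * z) / r) = fun z => deriv f (r * z) := by
  ext z
  rw [deriv_div_const, deriv_comp_mul_left, smul_eq_mul, mul_div_cancel_left₀ _ hr]

theorem ruscheweyhTerm_dilation {r : ℂ} (hr : r ≠ 0) (s : ℂ) (f : ℂ → ℂ) (z : ℂ) :
    ruscheweyhTerm s (fun z => f (r * z) / r) z = ruscheweyhTerm s f (r * z) := by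
  have hderiv2 : deriv (deriv fun z => f (r * z) / r) = fun z => r * deriv (deriv f) (r * z) := by
    ext w
    rw [deriv_dilation hr, deriv_comp_mul_left, smul_eq_mul]
  simp only [ruscheweyhTerm]
  rw [hderiv2, deriv_dilation hr, div_div_eq_mul_div]
  ring

theorem AnalyticOnNhd.dilation {f : ℂ → ℂ} {r : ℂ} {R : ℝ} (hf : AnalyticOnNhd ℂ f (ball 0 R))
    (hr : ‖r‖ ≤ 1) : AnalyticOnNhd ℂ (fun z => f (r * z) / r) (ball 0 R) := by
  intro z hz
  have hrz : r * z ∈ ball (0 : ℂ) R := by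
    rw [mem_ball_zero_iff] at hz ⊢
    rw [norm_mul]
    exact lt_of_le_of_lt (mul_le_of_le_one_left (norm_nonneg z) hr) hz
  exact ((hf _ hrz).comp (analyticAt_const.mul analyticAt_id)).div_const

theorem mul_deriv_div_eq_deriv_div_dslope {f : ℂ → ℂ} (hf0 : f 0 = 0) {z : ℂ} (hz : z ≠ 0) :
    z * deriv f z / f z = deriv f z / dslope f 0 z := by
  rw [dslope_of_ne f hz, slope_def_field, hf0, sub_zero, sub_zero, div_div_eq_mul_div, mul_comm]

theorem differentiableOn_deriv_div_dslope {f : ℂ → ℂ} {U : Set ℂ} (hU : IsOpen U) (h0 : 0 ∈ U)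
    (hf : AnalyticOnNhd ℂ f U) (hf0 : f 0 = 0) (hf'0 : deriv f 0 ≠ 0)
    (hfz : ∀ z ∈ U \ {0}, f z ≠ 0) :
    DifferentiableOn ℂ (fun z => deriv f z / dslope f 0 z) U := by
  have hdslope : DifferentiableOn ℂ (dslope f 0) U :=
    (Complex.differentiableOn_dslope (hU.mem_nhds h0)).2 hf.differentiableOn
  refine hf.deriv.differentiableOn.div hdslope fun z hz => ?_
  rcases eq_or_ne z 0 with rfl | hz0
  · rwa [dslope_same]
  · rw [dslope_of_ne f hz0, slope_def_field, hf0, sub_zero, sub_zero]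
    exact div_ne_zero (hfz z ⟨hz, hz0⟩) hz0

theorem exists_differentiableOn_eq_ruscheweyhTerm (s : ℂ) {f : ℂ → ℂ} {U : Set ℂ}
    (hU : IsOpen U) (h0 : 0 ∈ U) (hf : AnalyticOnNhd ℂ f U) (hf0 : f 0 = 0)
    (hf' : ∀ z ∈ U, deriv f z ≠ 0) (hfz : ∀ z ∈ U \ {0}, f z ≠ 0) :
    ∃ g : ℂ → ℂ, DifferentiableOn ℂ g U ∧ ∀ z ≠ 0, ruscheweyhTerm s f z = g z := by
  refine ⟨fun z => s * (1 + z * deriv (deriv f) z / deriv f z)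
    + (1 - s) * (deriv f z / dslope f 0 z), ?_, fun z hz => ?_⟩
  · exact ((differentiableOn_const s).mul ((differentiableOn_const 1).add
      ((differentiableOn_id.mul hf.deriv.deriv.differentiableOn).div
        hf.deriv.differentiableOn hf'))).add ((differentiableOn_const (1 - s)).mul
      (differentiableOn_deriv_div_dslope hU h0 hf hf0 (hf' 0 h0) hfz))
  · rw [ruscheweyhTerm, mul_deriv_div_eq_deriv_div_dslope hf0 hz]

theorem norm_le_of_norm_le_of_forall_mem_sphere {F : Type*} [NormedAddCommGroup F]
    [NormedSpace ℂ F] {g : ℂ → F} {R ρ M : ℝ} (hg : DifferentiableOn ℂ g (ball 0 R))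
    (hρ : ρ < R) (hbound : ∀ ζ ∈ sphere (0 : ℂ) ρ, ‖g ζ‖ ≤ M) {w : ℂ} (hw : ‖w‖ ≤ ρ) :
    ‖g w‖ ≤ M := by
  rcases (norm_nonneg w).trans hw |>.eq_or_lt with rfl | hρ0
  · exact hbound w (by simpa using hw.antisymm (norm_nonneg w))
  have hcl : closure (ball (0 : ℂ) ρ) = closedBall 0 ρ := closure_ball 0 hρ0.ne'
  refine Complex.norm_le_of_forall_mem_frontier_norm_le (U := ball 0 ρ) isBounded_ball ⟨?_, ?_⟩ ?_ ?_
  · exact hg.mono (ball_subset_ball hρ.le)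
  · exact hcl ▸ hg.continuousOn.mono (closedBall_subset_ball hρ)
  · rwa [frontier_ball 0 hρ0.ne']
  · simpa [hcl] using hw

theorem ruscheweyh_dilation_stability_general
    (a : ℝ)
    (c s : ℂ)
    (M : ℝ)
    (f : ℂ → ℂ)
    (hf : AnalyticOnNhd ℂ f (ball 0 1)) (hf0 : f 0 = 0) (hf'0 : deriv f 0 = 1)
    (hf' : ∀ z ∈ ball (0 : ℂ) 1, deriv f z ≠ 0)
    (hfz : ∀ z ∈ ball (0 : ℂ) 1 \ {0}, f z ≠ 0)
    (hineq : ∀ z ∈ ball (0 : ℂ) 1 \ {0},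
      ‖(c * ((‖z‖ : ℝ) : ℂ) ^ 2 + s
        - (a : ℂ) * (1 - ((‖z‖ : ℝ) : ℂ) ^ 2) *
          (s * (1 + z * deriv (deriv f) z / deriv f z)
            + (1 - s) * (z * deriv f z / f z)))‖ ≤ M)
    (r : ℝ) (hr0 : 0 < r) (hr1 : r < 1)
    (fr : ℂ → ℂ) (hfr : fr = fun z => f ((r : ℂ) * z) / (r : ℂ)) :
    (AnalyticOnNhd ℂ fr (ball 0 1) ∧ fr 0 = 0 ∧ deriv fr 0 = 1) ∧
    ∀ z ∈ ball (0 : ℂ) 1 \ {0},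
      ‖(c * ((‖z‖ : ℝ) : ℂ) ^ 2 + s
        - (a : ℂ) * (1 - ((‖z‖ : ℝ) : ℂ) ^ 2) *
          (s * (1 + z * deriv (deriv fr) z / deriv fr z)
            + (1 - s) * (z * deriv fr z / fr z)))‖ ≤ M := by
  subst hfr
  have hr : (r : ℂ) ≠ 0 := Complex.ofReal_ne_zero.2 hr0.ne'
  have hr_norm : ‖(r : ℂ)‖ ≤ 1 := by
    rw [Complex.norm_real, Real.norm_of_nonneg hr0.le]
    exact hr1.le
  obtain ⟨g, hg, hterm⟩ :=
    exists_differentiableOn_eq_ruscheweyhTerm s isOpen_ball (mem_ball_self one_pos) hf hf0 hf' hfz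
  refine ⟨⟨hf.dilation hr_norm, by simp [hf0], by simp only [deriv_dilation hr, mul_zero, hf'0]⟩, ?_⟩
  rintro z ⟨hz1, hz0 : z ≠ 0⟩
  show ‖c * ((‖z‖ : ℝ) : ℂ) ^ 2 + s - (a : ℂ) * (1 - ((‖z‖ : ℝ) : ℂ) ^ 2) *
    ruscheweyhTerm s (fun z => f (r * z) / r) z‖ ≤ M
  rw [ruscheweyhTerm_dilation hr, hterm _ (mul_ne_zero hr hz0)]
  refine norm_le_of_norm_le_of_forall_mem_sphere
    (g := fun ζ => c * ((‖z‖ : ℝ) : ℂ) ^ 2 + s - (a : ℂ) * (1 - ((‖z‖ : ℝ) : ℂ) ^ 2) * g ζ)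
    ((differentiableOn_const _).sub ((differentiableOn_const _).mul hg))
    (mem_ball_zero_iff.1 hz1) (fun ζ hζ => ?_) ?_
  · have hζ_norm : ‖ζ‖ = ‖z‖ := mem_sphere_zero_iff_norm.1 hζ
    have hζ0 : ζ ≠ 0 := norm_pos_iff.1 (hζ_norm ▸ norm_pos_iff.2 hz0)
    rw [← hζ_norm, ← hterm ζ hζ0]
    exact hineq ζ ⟨mem_ball_zero_iff.2 (hζ_norm ▸ mem_ball_zero_iff.1 hz1), hζ0⟩
  · rw [norm_mul]
    exact mul_le_of_le_one_left (norm_nonneg z) hr_norm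

theorem ruscheweyh_dilation_stability
    (a b k : ℝ) (ha : 0 < a) (hk0 : 0 ≤ k) (hk1 : k < 1)
    (c s : ℂ) (hs : s = (a : ℂ) + (b : ℂ) * Complex.I)
    (M : ℝ)
    (hM : M = if a ≤ 1 then a * k * ‖s‖ + (a - 1) * ‖s + c‖
              else k * ‖s‖)
    (f : ℂ → ℂ)
    (hf : AnalyticOnNhd ℂ f (ball 0 1)) (hf0 : f 0 = 0) (hf'0 : deriv f 0 = 1)
    (hf' : ∀ z ∈ ball (0 : ℂ) 1, deriv f z ≠ 0)
    (hfz : ∀ z ∈ ball (0 : ℂ) 1 \ {0}, f z ≠ 0)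
    (hineq : ∀ z ∈ ball (0 : ℂ) 1 \ {0},
      ‖(c * ((‖z‖ : ℝ) : ℂ) ^ 2 + s
        - (a : ℂ) * (1 - ((‖z‖ : ℝ) : ℂ) ^ 2) *
          (s * (1 + z * deriv (deriv f) z / deriv f z)
            + (1 - s) * (z * deriv f z / f z)))‖ ≤ M)
    (r : ℝ) (hr0 : 0 < r) (hr1 : r < 1)
    (fr : ℂ → ℂ) (hfr : fr = fun z => f ((r : ℂ) * z) / (r : ℂ)) :
    (AnalyticOnNhd ℂ fr (ball 0 1) ∧ fr 0 = 0 ∧ deriv fr 0 = 1) ∧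
    ∀ z ∈ ball (0 : ℂ) 1 \ {0},
      ‖(c * ((‖z‖ : ℝ) : ℂ) ^ 2 + s
        - (a : ℂ) * (1 - ((‖z‖ : ℝ) : ℂ) ^ 2) *
          (s * (1 + z * deriv (deriv fr) z / deriv fr z)
            + (1 - s) * (z * deriv fr z / fr z)))‖ ≤ M :=
  ruscheweyh_dilation_stability_general a c s M f hf hf0 hf'0 hf' hfz hineq r hr0 hr1 fr hfr
end

section
/- Let a > 0, b ∈ ℝ, s = a + ib, and k ∈ [0,1). Set l = (2ka + (1−k²)|b|) / ((1+k²)a + (1−k²)|s|) and D = (1+l²)a + (1−l²)|s|. Then for every complex number w with |a·w + i·b| ≤ k·|s|, one has |w + i·(1+l²)·b / D| ≤ 2·l·|s| / D. Equivalently, the closed disk {w : |a w + i b| ≤ k|s|} is contained in the closed disk of center −i(1+l²)b/D and radius 2l|s|/D. -/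
/-!
The hypothesis on `w` says that `w` lies in the closed disk of center `-i b / a` and radius
`k |s| / a`. Both centers lie on the imaginary axis, and since `D - (1 + l²) a = (1 - l²) |s|`
their distance is `(1 - l²) |b| |s| / (a D)`. The inclusion of the disks therefore reduces to
`k D + (1 - l²) |b| ≤ 2 l a`, which in fact holds with equality: solved for `k`, it says that
`k = (2 l a - (1 - l²) |b|) / D` recovers `k` from `l`, i.e. it inverts the formula defining `l`.
-/

open Complex Metric

theorem norm_mul_add_le_iff_mem_closedBall {𝕜 : Type*} [NormedField 𝕜] {a : 𝕜} (ha : a ≠ 0)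
    (w z : 𝕜) (ρ : ℝ) : ‖a * w + z‖ ≤ ρ ↔ w ∈ closedBall (-(z / a)) (ρ / ‖a‖) := by
  rw [mem_closedBall, le_div_iff₀' (norm_pos_iff.mpr ha), dist_eq_norm, sub_neg_eq_add,
    ← norm_mul, mul_add, mul_div_cancel₀ _ ha]

theorem dist_I_mul_ofReal (x y : ℝ) : dist (I * x) (I * y) = dist x y := by
  rw [dist_eq_norm, ← mul_sub, norm_mul, norm_I, one_mul, ← ofReal_sub, norm_real,
    Real.dist_eq, Real.norm_eq_abs]

theorem ratio_mem_Icc {a β r k : ℝ} (ha : 0 ≤ a) (hk0 : 0 ≤ k) (hk1 : k < 1) (hβ : 0 ≤ β)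
    (hβr : β ≤ r) :
    (2 * k * a + (1 - k ^ 2) * β) / ((1 + k ^ 2) * a + (1 - k ^ 2) * r) ∈ Set.Icc 0 1 := by
  have hk2 : 0 < 1 - k ^ 2 := by nlinarith
  have hE : 0 ≤ (1 + k ^ 2) * a + (1 - k ^ 2) * r := by nlinarith
  refine ⟨div_nonneg (by positivity) hE, div_le_one_of_le₀ ?_ hE⟩
  nlinarith [sq_nonneg (1 - k)]

theorem ratio_identity {a β r k l : ℝ} (hr : r ^ 2 = a ^ 2 + β ^ 2)
    (hE : (1 + k ^ 2) * a + (1 - k ^ 2) * r ≠ 0)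
    (hl : l * ((1 + k ^ 2) * a + (1 - k ^ 2) * r) = 2 * k * a + (1 - k ^ 2) * β) :
    k * ((1 + l ^ 2) * a + (1 - l ^ 2) * r) + (1 - l ^ 2) * β = 2 * l * a := by
  have h : (k * ((1 + l ^ 2) * a + (1 - l ^ 2) * r) + (1 - l ^ 2) * β - 2 * l * a) *
      ((1 + k ^ 2) * a + (1 - k ^ 2) * r) ^ 2 = 0 := by
    linear_combination
      ((1 - k ^ 2) ^ 2 * (k * r + k * a + β) + 2 * k * (1 - k ^ 2) * (1 + k ^ 2) * a) * hr
      + ((k * a - k * r - β) * (l * ((1 + k ^ 2) * a + (1 - k ^ 2) * r)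
          + (2 * k * a + (1 - k ^ 2) * β)) - 2 * a * ((1 + k ^ 2) * a + (1 - k ^ 2) * r)) * hl
  rw [mul_eq_zero, sub_eq_zero] at h
  exact h.resolve_right (pow_ne_zero 2 hE)

theorem abs_div_sub_mul_div {a b r l D : ℝ} (ha : 0 < a) (hD0 : 0 < D) (hl : l ^ 2 ≤ 1)
    (hr : 0 ≤ r) (hD : D = (1 + l ^ 2) * a + (1 - l ^ 2) * r) :
    |b / a - (1 + l ^ 2) * b / D| = (1 - l ^ 2) * r * |b| / (a * D) := by
  have h : b / a - (1 + l ^ 2) * b / D = (1 - l ^ 2) * r * b / (a * D) := by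
    field_simp
    linear_combination b * hD
  rw [h, abs_div, abs_mul, abs_mul, abs_of_nonneg (sub_nonneg.mpr hl), abs_of_nonneg hr,
    abs_of_pos (mul_pos ha hD0)]

theorem disk_inclusion
    (a b k : ℝ) (ha : 0 < a) (hk0 : 0 ≤ k) (hk1 : k < 1)
    (s : ℂ) (hs : s = (a : ℂ) + (b : ℂ) * Complex.I)
    (l D : ℝ)
    (hl : l = (2 * k * a + (1 - k ^ 2) * |b|) /
              ((1 + k ^ 2) * a + (1 - k ^ 2) * ‖s‖))
    (hD : D = (1 + l ^ 2) * a + (1 - l ^ 2) * ‖s‖)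
    (w : ℂ)
    (hw : ‖(a : ℂ) * w + Complex.I * (b : ℂ)‖ ≤ k * ‖s‖) :
    ‖w + Complex.I * (((1 + l ^ 2) * b / D : ℝ) : ℂ)‖ ≤
      2 * l * ‖s‖ / D := by
  have hre : s.re = a := by simp [hs]
  have him : s.im = b := by simp [hs]
  have hr : ‖s‖ ^ 2 = a ^ 2 + |b| ^ 2 := by
    rw [sq_abs, ← normSq_eq_norm_sq, normSq_apply, hre, him, sq, sq]
  have hbr : |b| ≤ ‖s‖ := him ▸ abs_im_le_norm s
  have hE : 0 < (1 + k ^ 2) * a + (1 - k ^ 2) * ‖s‖ := by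
    nlinarith [norm_nonneg s, mul_nonneg (sub_nonneg.mpr hk1.le) (norm_nonneg s)]
  obtain ⟨hl0, hl1⟩ : l ∈ Set.Icc 0 1 := hl ▸ ratio_mem_Icc ha.le hk0 hk1 (abs_nonneg b) hbr
  have hl2 : l ^ 2 ≤ 1 := pow_le_one₀ hl0 hl1
  have hD0 : 0 < D := by nlinarith [norm_nonneg s]
  have key := ratio_identity (l := l) hr hE.ne' (by rw [hl, div_mul_cancel₀ _ hE.ne'])
  rw [← hD] at key
  have hw' := (norm_mul_add_le_iff_mem_closedBall (ofReal_ne_zero.mpr ha.ne') _ _ _).mp hw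
  rw [norm_real, Real.norm_of_nonneg ha.le,
    show -(I * b / a) = I * ((-(b / a) : ℝ) : ℂ) by push_cast; ring] at hw'
  have hsub : closedBall (I * ((-(b / a) : ℝ) : ℂ)) (k * ‖s‖ / a) ⊆
      closedBall (I * ((-((1 + l ^ 2) * b / D) : ℝ) : ℂ)) (2 * l * ‖s‖ / D) := by
    refine closedBall_subset_closedBall' (le_of_eq ?_)
    rw [dist_I_mul_ofReal, dist_neg_neg, Real.dist_eq,
      abs_div_sub_mul_div ha hD0 hl2 (norm_nonneg s) hD]
    field_simp
    linear_combination ‖s‖ * key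
  simpa [dist_eq_norm] using hsub hw'
end

section
/- Let s = a + ib with a > 0 and b real, let l ∈ [0,1), and let P be a complex number. Set D = (1+l²)a + (1−l²)|s|. Then |s(1+P) − |s|(1−P)| ≤ l·|s(1+P) + |s|(1−P)| if and only if |P + i·(1+l²)·b / D| ≤ 2·l·|s| / D. -/
/-!
Write `r = |s|` and `x + iy = P`. Squaring the left inequality and expanding `‖w ± u‖²` for
`w = s(1+P)`, `u = r(1-P)`, it becomes, after division by `2r > 0`, the quadratic condition
`E ≤ 0` with `E = D |P|² + 2(1+l²) b y + (1-l²) r - (1+l²) a`. Squaring the right inequality and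
multiplying by `D²` gives `D · E ≤ 0`, because `r² = a² + b²` yields the factorization
`(1+l²)² b² - 4 l² r² = D ((1-l²) r - (1+l²) a)`. As `D > 0`, both are `E ≤ 0`.
-/

theorem mul_nonpos_iff_of_pos_left {α : Type*} [Semiring α] [PartialOrder α] [PosMulMono α]
    [PosMulReflectLE α] {c x : α} (hc : 0 < c) : c * x ≤ 0 ↔ x ≤ 0 := by
  simpa using mul_le_mul_iff_of_pos_left (b := x) (c := 0) hc

theorem norm_sub_le_mul_norm_add_iff {E : Type*} [NormedAddCommGroup E] [InnerProductSpace ℝ E]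
    {l : ℝ} (hl : 0 ≤ l) (w u : E) :
    ‖w - u‖ ≤ l * ‖w + u‖ ↔ (1 - l ^ 2) * (‖w‖ ^ 2 + ‖u‖ ^ 2) ≤ 2 * (1 + l ^ 2) * inner ℝ w u := by
  rw [← sq_le_sq₀ (norm_nonneg _) (by positivity), mul_pow, norm_sub_sq_real, norm_add_sq_real]
  constructor <;> intro h <;> linarith

namespace Complex

theorem sq_norm_eq_re_sq_add_im_sq (z : ℂ) : ‖z‖ ^ 2 = z.re ^ 2 + z.im ^ 2 := by
  rw [Complex.sq_norm, normSq_apply]; ring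

theorem sq_norm_mul_one_add_add_sq_norm_mul_one_sub (s P : ℂ) :
    ‖s * (1 + P)‖ ^ 2 + ‖(‖s‖ : ℂ) * (1 - P)‖ ^ 2 = 2 * ‖s‖ ^ 2 * (1 + ‖P‖ ^ 2) := by
  simp only [norm_mul, norm_real, norm_norm, mul_pow, sq_norm_eq_re_sq_add_im_sq, add_re, add_im,
    sub_re, sub_im, one_re, one_im]
  ring

theorem inner_mul_one_add_mul_one_sub (s P : ℂ) :
    inner ℝ (s * (1 + P)) ((‖s‖ : ℂ) * (1 - P)) =
      ‖s‖ * (s.re * (1 - ‖P‖ ^ 2) - 2 * s.im * P.im) := by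
  rw [Complex.inner, sq_norm_eq_re_sq_add_im_sq]
  simp only [mul_re, mul_im, conj_re, conj_im, add_re, add_im, sub_re, sub_im, one_re, one_im,
    ofReal_re, ofReal_im]
  ring

end Complex

noncomputable def moebiusDiskDenom (s : ℂ) (l : ℝ) : ℝ :=
  (1 + l ^ 2) * s.re + (1 - l ^ 2) * ‖s‖

noncomputable def moebiusDiskForm (s : ℂ) (l : ℝ) (P : ℂ) : ℝ :=
  moebiusDiskDenom s l * ‖P‖ ^ 2 + 2 * (1 + l ^ 2) * s.im * P.im +
    ((1 - l ^ 2) * ‖s‖ - (1 + l ^ 2) * s.re)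

theorem moebiusDiskDenom_pos {s : ℂ} (hs : 0 < s.re) {l : ℝ} (hl : l ^ 2 ≤ 1) :
    0 < moebiusDiskDenom s l :=
  add_pos_of_pos_of_nonneg (by positivity) (mul_nonneg (by linarith) (norm_nonneg s))

theorem norm_sub_le_mul_norm_add_iff_moebiusDiskForm_nonpos {s : ℂ} (hs : s ≠ 0) {l : ℝ}
    (hl : 0 ≤ l) (P : ℂ) :
    ‖s * (1 + P) - (‖s‖ : ℂ) * (1 - P)‖ ≤ l * ‖s * (1 + P) + (‖s‖ : ℂ) * (1 - P)‖ ↔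
      moebiusDiskForm s l P ≤ 0 := by
  rw [norm_sub_le_mul_norm_add_iff hl, Complex.sq_norm_mul_one_add_add_sq_norm_mul_one_sub,
    Complex.inner_mul_one_add_mul_one_sub, ← sub_nonpos]
  have key : (1 - l ^ 2) * (2 * ‖s‖ ^ 2 * (1 + ‖P‖ ^ 2)) -
      2 * (1 + l ^ 2) * (‖s‖ * (s.re * (1 - ‖P‖ ^ 2) - 2 * s.im * P.im)) =
      2 * ‖s‖ * moebiusDiskForm s l P := by
    unfold moebiusDiskForm moebiusDiskDenom; ring
  rw [key, mul_nonpos_iff_of_pos_left (by positivity)]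

theorem norm_add_I_mul_le_iff_moebiusDiskForm_nonpos {s : ℂ} (hs : 0 < s.re) {l : ℝ}
    (hl0 : 0 ≤ l) (hl1 : l ^ 2 ≤ 1) (P : ℂ) :
    ‖P + Complex.I * (((1 + l ^ 2) * s.im / moebiusDiskDenom s l : ℝ) : ℂ)‖ ≤
        2 * l * ‖s‖ / moebiusDiskDenom s l ↔
      moebiusDiskForm s l P ≤ 0 := by
  have hD := moebiusDiskDenom_pos hs hl1
  have key : moebiusDiskDenom s l *
      (‖P + Complex.I * (((1 + l ^ 2) * s.im / moebiusDiskDenom s l : ℝ) : ℂ)‖ ^ 2 -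
        (2 * l * ‖s‖ / moebiusDiskDenom s l) ^ 2) = moebiusDiskForm s l P := by
    have hr2 := Complex.sq_norm_eq_re_sq_add_im_sq s
    simp only [Complex.sq_norm_eq_re_sq_add_im_sq P, Complex.sq_norm_eq_re_sq_add_im_sq (P + _),
      Complex.add_re, Complex.add_im, Complex.mul_re, Complex.mul_im, Complex.I_re, Complex.I_im,
      Complex.ofReal_re, Complex.ofReal_im, moebiusDiskForm]
    field_simp
    unfold moebiusDiskDenom
    linear_combination -(1 + l ^ 2) ^ 2 * hr2
  rw [← sq_le_sq₀ (norm_nonneg _) (by positivity), ← sub_nonpos,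
    ← mul_nonpos_iff_of_pos_left hD, key]

theorem moebius_disk_equivalence
    (a b : ℝ) (ha : 0 < a)
    (s : ℂ) (hs : s = (a : ℂ) + (b : ℂ) * Complex.I)
    (l : ℝ) (hl0 : 0 ≤ l) (hl1 : l < 1)
    (D : ℝ) (hD : D = (1 + l ^ 2) * a + (1 - l ^ 2) * ‖s‖)
    (P : ℂ) :
    ‖s * (1 + P) - (‖s‖ : ℂ) * (1 - P)‖ ≤
        l * ‖s * (1 + P) + (‖s‖ : ℂ) * (1 - P)‖ ↔
      ‖P + Complex.I * (((1 + l ^ 2) * b / D : ℝ) : ℂ)‖ ≤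
        2 * l * ‖s‖ / D := by
  obtain ⟨rfl, rfl⟩ : a = s.re ∧ b = s.im := by simp [hs]
  have hD' : D = moebiusDiskDenom s l := hD
  have hs0 : s ≠ 0 := fun h => by simp [h] at ha
  have hl2 : l ^ 2 ≤ 1 := by nlinarith
  rw [hD', norm_sub_le_mul_norm_add_iff_moebiusDiskForm_nonpos hs0 hl0,
    norm_add_I_mul_le_iff_moebiusDiskForm_nonpos ha hl0 hl2]
end

section
/- Let f ∈ 𝒜 with f'(z) ≠ 0 for all z ∈ 𝔻, let c be a complex constant, and let k ∈ [0,1]. If |c·|z|² + (1 − |z|²)·z f''(z)/f'(z)| ≤ k for all z ∈ 𝔻, then |c| ≤ k. -/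
/-!
On the circle `|z| = r < 1` the expression `c |z|² + (1 - |z|²) g(z)`, with `g = z f''/f'`, agrees
with the holomorphic function `c r² + (1 - r²) g(z)`, whose value at `0` is `c r²` because `g(0) = 0`.
The maximum modulus principle gives `|c| r² ≤ k`, and letting `r → 1` gives `|c| ≤ k`.
-/

open Metric Set Filter Topology

theorem Complex.norm_le_of_forall_mem_sphere_norm_le {h : ℂ → ℂ} {a : ℂ} {r k : ℝ} (hr : 0 < r)
    (hd : DifferentiableOn ℂ h (closedBall a r)) (hk : ∀ z ∈ sphere a r, ‖h z‖ ≤ k)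
    {w : ℂ} (hw : w ∈ closedBall a r) : ‖h w‖ ≤ k := by
  refine Complex.norm_le_of_forall_mem_frontier_norm_le isBounded_ball
    (hd.diffContOnCl_ball subset_rfl) ?_ (by rwa [closure_ball a hr.ne'])
  rwa [frontier_ball a hr.ne']

theorem le_of_forall_mem_Ioo_mul_sq_le {a b : ℝ} (h : ∀ r ∈ Ioo (0 : ℝ) 1, a * r ^ 2 ≤ b) :
    a ≤ b := by
  have hlim : Tendsto (fun r : ℝ => a * r ^ 2) (𝓝[<] 1) (𝓝 a) := by
    have : Continuous fun r : ℝ => a * r ^ 2 := by fun_prop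
    simpa using (this.tendsto 1).mono_left nhdsWithin_le_nhds
  exact le_of_tendsto hlim (eventually_of_mem (Ioo_mem_nhdsLT zero_lt_one) h)

theorem norm_le_of_forall_norm_mul_sq_add_one_sub_sq_mul_le {g : ℂ → ℂ}
    (hg : DifferentiableOn ℂ g (ball 0 1)) (hg0 : g 0 = 0) {c : ℂ} {k : ℝ}
    (hk : ∀ z ∈ ball (0 : ℂ) 1, ‖c * (‖z‖ : ℂ) ^ 2 + (1 - (‖z‖ : ℂ) ^ 2) * g z‖ ≤ k) :
    ‖c‖ ≤ k := by
  refine le_of_forall_mem_Ioo_mul_sq_le fun r ⟨hr0, hr1⟩ => ?_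
  let h : ℂ → ℂ := fun z => c * (r : ℂ) ^ 2 + (1 - (r : ℂ) ^ 2) * g z
  have hsub : closedBall (0 : ℂ) r ⊆ ball 0 1 := closedBall_subset_ball hr1
  have hd : DifferentiableOn ℂ h (closedBall 0 r) :=
    (differentiableOn_const _).add ((differentiableOn_const _).mul (hg.mono hsub))
  have hsphere : ∀ z ∈ sphere (0 : ℂ) r, ‖h z‖ ≤ k := fun z hz => by
    have hz' : ‖z‖ = r := mem_sphere_zero_iff_norm.mp hz
    simpa only [h, hz'] using hk z (hsub (sphere_subset_closedBall hz))
  have h0 : ‖h 0‖ = ‖c‖ * r ^ 2 := by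
    simp [h, hg0, abs_of_pos hr0]
  exact h0 ▸ Complex.norm_le_of_forall_mem_sphere_norm_le hr0 hd hsphere
    (mem_closedBall_self hr0.le)

theorem ahlfors_becker_constant_bound_general
    (f : ℂ → ℂ)
    (hf : AnalyticOnNhd ℂ f (ball 0 1))
    (hf' : ∀ z ∈ ball (0 : ℂ) 1, deriv f z ≠ 0)
    (c : ℂ) (k : ℝ)
    (hineq : ∀ z ∈ ball (0 : ℂ) 1,
      ‖c * (‖z‖ : ℂ) ^ 2
        + (1 - (‖z‖ : ℂ) ^ 2) * (z * deriv (deriv f) z / deriv f z)‖ ≤ k) :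
    ‖c‖ ≤ k := by
  refine norm_le_of_forall_norm_mul_sq_add_one_sub_sq_mul_le
    (g := fun z => z * deriv (deriv f) z / deriv f z) (fun z hz => ?_) (by simp) hineq
  exact ((analyticAt_id.mul (hf.deriv.deriv z hz)).div (hf.deriv z hz)
    (hf' z hz)).differentiableAt.differentiableWithinAt

theorem ahlfors_becker_constant_bound
    (f : ℂ → ℂ)
    (hf : AnalyticOnNhd ℂ f (ball 0 1)) (hf0 : f 0 = 0) (hf'0 : deriv f 0 = 1)
    (hf' : ∀ z ∈ ball (0 : ℂ) 1, deriv f z ≠ 0)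
    (c : ℂ) (k : ℝ) (hk0 : 0 ≤ k) (hk1 : k ≤ 1)
    (hineq : ∀ z ∈ ball (0 : ℂ) 1,
      ‖c * (‖z‖ : ℂ) ^ 2
        + (1 - (‖z‖ : ℂ) ^ 2) * (z * deriv (deriv f) z / deriv f z)‖ ≤ k) :
    ‖c‖ ≤ k :=
  ahlfors_becker_constant_bound_general f hf hf' c k hineq
end
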